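/- Let b = λ + iη with λ, η ∈ ℝ and λ > 0. Define for n ≥ 0 the polynomials ℛₙ(b;z) = ((2λ)ₙ/(λ)ₙ) · Σ_{k=0}^{n} [(−n)ₖ(b)ₖ/((2λ)ₖ k!)] (1−z)ᵏ, and let 𝒫ₙ(b;x) be the complementary Romanovski–Routh polynomials defined by 𝒫₀(b;x) = 1, 𝒫₁(b;x) = x − c₁, and 𝒫ₙ₊₁(b;x) = (x − cₙ₊₁)𝒫ₙ(b;x) − dₙ₊₁(x² + 1)𝒫ₙ₋₁(b;x) for n ≥ 1, where cₙ = η/(λ+n−1) and dₙ₊₁ = n(2λ+n−1)/(4(λ+n−1)(λ+n)). Then for every n ≥ 0 and every real x, ℛₙ(b; (x+i)/(x−i)) = (2ⁿ/(x−i)ⁿ) · 𝒫ₙ(b;x). -/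

import Mathlib

open Complex Finset

/-- Pochhammer symbol `(a)ₖ` over ℂ. -/
noncomputable def poch (a : ℂ) (k : ℕ) : ℂ := Polynomial.eval a (ascPochhammer ℂ k)

/-- The polynomials `ℛₙ(b;z)` (hypergeometric form), with `b = λ + iη`. -/
noncomputable def RR (lam eta : ℝ) (n : ℕ) (z : ℂ) : ℂ :=
  (poch (2 * lam) n / poch (lam : ℂ) n) *
    ∑ k ∈ Finset.range (n + 1),
      poch (-(n : ℂ)) k * poch ((lam : ℂ) + (eta : ℂ) * I) k /
          (poch (2 * lam) k * (Nat.factorial k : ℂ)) * (1 - z) ^ k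

/-- Complementary Romanovski–Routh polynomials `𝒫ₙ(b;x)` with `b = λ + iη`,
defined by the three-term recurrence, evaluated at complex `x`. -/
noncomputable def crr (lam eta : ℝ) : ℕ → ℂ → ℂ
  | 0, _ => 1
  | 1, x => x - ((eta / lam : ℝ) : ℂ)
  | n + 2, x =>
      (x - ((eta / (lam + n + 1) : ℝ) : ℂ)) * crr lam eta (n + 1) x -
        (((n + 1) * (2 * lam + n) / (4 * (lam + n) * (lam + n + 1)) : ℝ) : ℂ) *
          (x ^ 2 + 1) * crr lam eta n x

/-!
`ℛₙ(b; z)` is `(2λ)ₙ / (λ)ₙ` times the terminating Gauss series `₂F₁(-n, b; 2λ; 1 - z)`, so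
Gauss's contiguous relation in the degree gives a three-term recurrence for `ℛₙ`. At the Cayley
point `ζ = (x + i)/(x - i)`, with `w = 2/(x - i)`, one has `1 - ζ = -i w` and
`ζ = (x² + 1) w² / 4`; substituting these turns the recurrence for `ℛₙ(b; ζ)` into the defining
recurrence of `wⁿ 𝒫ₙ(b; x)`, and the two sequences agree for `n = 0, 1`.
-/

open scoped Nat

lemma poch_zero (a : ℂ) : poch a 0 = 1 := by simp [poch]

lemma poch_succ_right (a : ℂ) (k : ℕ) : poch a (k + 1) = poch a k * (a + k) :=
  ascPochhammer_succ_eval k a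

lemma poch_succ_left (a : ℂ) (k : ℕ) : poch a (k + 1) = a * poch (a + 1) k := by
  simp [poch, ascPochhammer_succ_left, Polynomial.eval_comp]

lemma poch_ne_zero {a : ℂ} (ha : ∀ k : ℕ, a + k ≠ 0) (k : ℕ) : poch a k ≠ 0 := by
  simp only [poch, ne_eq, ascPochhammer_eval_eq_zero_iff, not_exists, not_and]
  exact fun j _ hj => ha j (by rw [hj]; ring)

lemma poch_neg_natCast_of_lt {n k : ℕ} (h : n < k) : poch (-(n : ℂ)) k = 0 :=
  ascPochhammer_eval_neg_coe_nat_of_lt h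

noncomputable def hypergeomCoeff (b c : ℂ) (n k : ℕ) : ℂ :=
  poch (-(n : ℂ)) k * poch b k / (poch c k * (k ! : ℂ))

/-- The terminating Gauss series `₂F₁(-n, b; c; u)`. -/
noncomputable def hypergeomPoly (b c : ℂ) (n : ℕ) (u : ℂ) : ℂ :=
  ∑ k ∈ range (n + 1), hypergeomCoeff b c n k * u ^ k

section Hypergeom

variable {b c : ℂ}

@[simp]
lemma hypergeomCoeff_zero_right (n : ℕ) : hypergeomCoeff b c n 0 = 1 := by
  simp [hypergeomCoeff, poch_zero]

lemma hypergeomCoeff_of_lt {n k : ℕ} (h : n < k) : hypergeomCoeff b c n k = 0 := by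
  simp [hypergeomCoeff, poch_neg_natCast_of_lt h]

lemma hypergeomCoeff_succ (hc : ∀ k : ℕ, c + k ≠ 0) (n m : ℕ) :
    (c + m) * (m + 1) * hypergeomCoeff b c n (m + 1) =
      poch (-(n : ℂ)) (m + 1) * (b + m) * (poch b m / (poch c m * (m ! : ℂ))) := by
  have := poch_ne_zero hc m
  have := hc m
  simp only [hypergeomCoeff, poch_succ_right, Nat.factorial_succ, Nat.cast_mul, Nat.cast_succ]
  field_simp

lemma hypergeomCoeff_contiguous (hc : ∀ k : ℕ, c + k ≠ 0) (n m : ℕ) :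
    (c + n + 1) * hypergeomCoeff b c (n + 2) (m + 1) =
      (c + 2 * n + 2) * hypergeomCoeff b c (n + 1) (m + 1)
        - (n + 1) * hypergeomCoeff b c n (m + 1)
        - (b + n + 1) * hypergeomCoeff b c (n + 1) m
        + (n + 1) * hypergeomCoeff b c n m := by
  have hcm : (c + m) * (m + 1) ≠ 0 := mul_ne_zero (hc m) (by exact_mod_cast m.succ_ne_zero)
  refine mul_left_cancel₀ hcm ?_
  set r := poch b m / (poch c m * (m ! : ℂ))
  have hN : ∀ N : ℕ, hypergeomCoeff b c N m = poch (-(N : ℂ)) m * r := fun N => by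
    simp only [hypergeomCoeff, r, mul_div_assoc]
  have e2 : poch (-((n + 2 : ℕ) : ℂ)) (m + 1) = -(n + 2) * poch (-((n + 1 : ℕ) : ℂ)) m := by
    rw [poch_succ_left]; push_cast; ring_nf
  have e1 : poch (-((n + 1 : ℕ) : ℂ)) (m + 1) = poch (-((n + 1 : ℕ) : ℂ)) m * (m - n - 1) := by
    rw [poch_succ_right]; push_cast; ring
  have e1' : poch (-((n + 1 : ℕ) : ℂ)) (m + 1) = -(n + 1) * poch (-(n : ℂ)) m := by
    rw [poch_succ_left]; push_cast; ring_nf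
  have e0 : poch (-(n : ℂ)) (m + 1) = poch (-(n : ℂ)) m * (m - n) := by
    rw [poch_succ_right]; ring
  -- Every term is now a multiple of `r`; what remains is linear in `(-n-1)ₘ` and `(-n)ₘ`,
  -- which are tied together by the two expansions `e1`, `e1'` of `(-n-1)ₘ₊₁`.
  linear_combination (c + n + 1) * hypergeomCoeff_succ (b := b) hc (n + 2) m
    - (c + 2 * n + 2) * hypergeomCoeff_succ (b := b) hc (n + 1) m
    + (n + 1) * hypergeomCoeff_succ (b := b) hc n m
    + (c + m) * (m + 1) * (b + n + 1) * hN (n + 1) - (c + m) * (m + 1) * (n + 1) * hN n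
    + (c + n + 1) * (b + m) * r * e2 - (c + 2 * n + 2) * (b + m) * r * e1
    + (n + 1) * (b + m) * r * e0
    + ((m - n) * (b + m) - (c + m) * (m + 1)) * r * (e1' - e1)

lemma hypergeomPoly_eq_sum_range {n N : ℕ} (h : n < N) (u : ℂ) :
    hypergeomPoly b c n u = ∑ k ∈ range N, hypergeomCoeff b c n k * u ^ k := by
  refine sum_subset (range_subset_range.2 h) fun k _ hk => ?_
  rw [hypergeomCoeff_of_lt (by simp only [mem_range, not_lt] at hk; omega), zero_mul]

lemma hypergeomPoly_eq_one_add {n N : ℕ} (h : n < N + 1) (u : ℂ) :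
    hypergeomPoly b c n u = 1 + ∑ m ∈ range N, hypergeomCoeff b c n (m + 1) * u ^ (m + 1) := by
  rw [hypergeomPoly_eq_sum_range h, sum_range_succ', hypergeomCoeff_zero_right]
  ring

lemma mul_hypergeomPoly {n N : ℕ} (h : n < N) (u : ℂ) :
    u * hypergeomPoly b c n u = ∑ m ∈ range N, hypergeomCoeff b c n m * u ^ (m + 1) := by
  rw [hypergeomPoly_eq_sum_range h, mul_sum]
  exact sum_congr rfl fun m _ => by ring

theorem hypergeomPoly_contiguous (hc : ∀ k : ℕ, c + k ≠ 0) (n : ℕ) (u : ℂ) :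
    (c + n + 1) * hypergeomPoly b c (n + 2) u =
      (c + 2 * n + 2 - (b + n + 1) * u) * hypergeomPoly b c (n + 1) u
        - (n + 1) * (1 - u) * hypergeomPoly b c n u := by
  have hsum : ∑ m ∈ range (n + 2),
      ((c + n + 1) * (hypergeomCoeff b c (n + 2) (m + 1) * u ^ (m + 1))
        - (c + 2 * n + 2) * (hypergeomCoeff b c (n + 1) (m + 1) * u ^ (m + 1))
        + (n + 1) * (hypergeomCoeff b c n (m + 1) * u ^ (m + 1))
        + (b + n + 1) * (hypergeomCoeff b c (n + 1) m * u ^ (m + 1))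
        - (n + 1) * (hypergeomCoeff b c n m * u ^ (m + 1))) = 0 :=
    sum_eq_zero fun m _ => by linear_combination u ^ (m + 1) * hypergeomCoeff_contiguous hc n m
  simp only [sum_add_distrib, sum_sub_distrib, ← mul_sum] at hsum
  linear_combination hsum
    + (c + n + 1) * hypergeomPoly_eq_one_add (b := b) (c := c) (n := n + 2) (N := n + 2) (by omega) u
    - (c + 2 * n + 2) * hypergeomPoly_eq_one_add (b := b) (c := c) (n := n + 1) (N := n + 2) (by omega) u
    + (n + 1) * hypergeomPoly_eq_one_add (b := b) (c := c) (n := n) (N := n + 2) (by omega) u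
    + (b + n + 1) * mul_hypergeomPoly (b := b) (c := c) (n := n + 1) (N := n + 2) (by omega) u
    - (n + 1) * mul_hypergeomPoly (b := b) (c := c) (n := n) (N := n + 2) (by omega) u

end Hypergeom

lemma ofReal_add_natCast_ne_zero {a : ℝ} (ha : 0 < a) (k : ℕ) : (a : ℂ) + k ≠ 0 := by
  exact_mod_cast (by positivity : a + k ≠ 0)

lemma RR_eq_hypergeomPoly (lam eta : ℝ) (n : ℕ) (z : ℂ) :
    RR lam eta n z = poch (2 * lam) n / poch lam n *
      hypergeomPoly (lam + eta * I) (2 * lam) n (1 - z) := rfl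

lemma RR_one {lam : ℝ} (hlam : (lam : ℂ) ≠ 0) (eta : ℝ) (z : ℂ) :
    RR lam eta 1 z = 2 - (lam + eta * I) / lam * (1 - z) := by
  simp only [RR_eq_hypergeomPoly, hypergeomPoly, sum_range_succ, sum_range_zero, hypergeomCoeff,
    poch_succ_right, poch_zero, Nat.factorial, Nat.cast_zero, Nat.cast_one, add_zero, zero_add,
    one_mul, mul_one, pow_zero, pow_one]
  field_simp
  ring

lemma RR_succ_succ {lam : ℝ} (hlam : 0 < lam) (eta : ℝ) (n : ℕ) (z : ℂ) :
    (lam + n) * (lam + n + 1) * RR lam eta (n + 2) z =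
      (lam + n) * (2 * (lam + n + 1) - (lam + eta * I + n + 1) * (1 - z)) * RR lam eta (n + 1) z
        - (n + 1) * (2 * lam + n) * z * RR lam eta n z := by
  have hlam' := ofReal_add_natCast_ne_zero hlam
  have h2lam : ∀ k : ℕ, 2 * (lam : ℂ) + k ≠ 0 := fun k => by
    exact_mod_cast ofReal_add_natCast_ne_zero (by positivity : 0 < 2 * lam) k
  have hpoch := poch_ne_zero hlam' n
  have hn₀ := hlam' n
  have hn₁ : (lam : ℂ) + (n + 1) ≠ 0 := by exact_mod_cast hlam' (n + 1)
  have h2n := h2lam n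
  have hF := hypergeomPoly_contiguous (b := lam + eta * I) h2lam n (1 - z)
  simp only [RR_eq_hypergeomPoly, poch_succ_right, Nat.cast_add, Nat.cast_one]
  generalize poch (2 * lam) n = A at *
  generalize hypergeomPoly (lam + eta * I) (2 * lam) (n + 2) (1 - z) = F₂ at *
  generalize hypergeomPoly (lam + eta * I) (2 * lam) (n + 1) (1 - z) = F₁ at *
  generalize hypergeomPoly (lam + eta * I) (2 * lam) n (1 - z) = F₀ at *
  field_simp
  linear_combination A * (2 * lam + n) * (lam + n + 1) * hF

lemma ofReal_sub_I_ne_zero (x : ℝ) : (x : ℂ) - I ≠ 0 := fun h => by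
  simpa using congrArg im h

lemma one_sub_cayley (x : ℝ) : 1 - (x + I) / (x - I) = -I * (2 / (x - I)) := by
  have := ofReal_sub_I_ne_zero x
  field_simp
  ring

lemma cayley_eq_mul_sq (x : ℝ) : (x + I) / (x - I) = (x ^ 2 + 1) * (2 / (x - I)) ^ 2 / 4 := by
  have := ofReal_sub_I_ne_zero x
  field_simp
  linear_combination -4 * I_sq

theorem stmt6 (lam eta : ℝ) (hlam : 0 < lam) (n : ℕ) (x : ℝ) :
    RR lam eta n (((x : ℂ) + I) / ((x : ℂ) - I)) =
      (2 ^ n / ((x : ℂ) - I) ^ n) * crr lam eta n x := by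
  have hl := ofReal_add_natCast_ne_zero hlam
  have hwx : 2 / ((x : ℂ) - I) * ((x : ℂ) - I) = 2 := div_mul_cancel₀ _ (ofReal_sub_I_ne_zero x)
  have hone_sub := one_sub_cayley x
  have hcayley := cayley_eq_mul_sq x
  rw [← div_pow]
  set w := 2 / ((x : ℂ) - I)
  induction n using Nat.twoStepInduction with
  | zero => simp [RR_eq_hypergeomPoly, hypergeomPoly, crr, poch_zero]
  | one =>
    have : (lam : ℂ) ≠ 0 := by simpa using hl 0
    rw [RR_one this, hone_sub]
    simp only [crr]
    push_cast
    field_simp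
    linear_combination -lam * hwx + eta * w * I_sq
  | more n ih₀ ih₁ =>
    have hn₀ := hl n
    have hn₁ : (lam : ℂ) + n + 1 ≠ 0 := by simpa [add_assoc] using hl (n + 1)
    refine mul_left_cancel₀ (mul_ne_zero hn₀ hn₁) ?_
    rw [RR_succ_succ hlam, ih₀, ih₁, hone_sub, hcayley]
    simp only [crr]
    push_cast
    field_simp
    linear_combination (-4 * (lam + n) * (lam + n + 1) * w ^ (n + 1) * crr lam eta (n + 1) x) * hwx
      + (4 * (lam + n) * w ^ (n + 2) * crr lam eta (n + 1) x * eta) * I_sq
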